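/- arXiv:2502.19724 — 2 statements merged into one kernel-verified Lean document; each statement's English description precedes it below -/
import Mathlib

section
/- Let G be a locally finite graph, v a vertex, and suppose F is a family of pairwise vertex-disjoint rays in G, each starting in the ball B(R, v). If |F| > k · b, where b bounds the size of every ball of radius s+ρ in G, and C is a set of k vertices (cop positions), then some ray in F is entirely at distance greater than s+ρ from every vertex of C. -/
open SimpleGraph

universe u

variable {V : Type u}

/-- The ball of radius `n` around `v`: vertices reachable from `v` at geodesic distance at most `n`. -/
def gBall (G : SimpleGraph V) (v : V) (n : ℕ) : Set V :=
  {u | G.Reachable v u ∧ G.dist v u ≤ n}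

/-- A ray: a one-sided infinite path, given by an injective map `ℕ → V` with consecutive
vertices adjacent. -/
def IsRay (G : SimpleGraph V) (f : ℕ → V) : Prop :=
  Function.Injective f ∧ ∀ n, G.Adj (f n) (f (n + 1))

/-- A nonempty finite path given as a list of pairwise distinct vertices with consecutive
vertices adjacent. -/
def IsPathList (G : SimpleGraph V) (l : List V) : Prop :=
  l ≠ [] ∧ l.Chain' G.Adj ∧ l.Nodup

/-- A finite path joining the vertex set `A` to the vertex set `B`. -/
def Joins (G : SimpleGraph V) (A B : Set V) (l : List V) : Prop :=
  IsPathList G l ∧ (∃ a ∈ A, l.head? = some a) ∧ ∃ b ∈ B, l.getLast? = some b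

/-- Two rays lie in the same end iff they are joined by infinitely many pairwise
vertex-disjoint paths. -/
def SameEnd (G : SimpleGraph V) (f g : ℕ → V) : Prop :=
  ∃ F : ℕ → List V,
    (∀ i, Joins G (Set.range f) (Set.range g) (F i)) ∧
    ∀ i j, i ≠ j → ∀ v, v ∈ F i → v ∉ F j

/-- The end represented by the ray `r` is thick: it contains arbitrarily large families of
pairwise vertex-disjoint rays. -/
def ThickEnd (G : SimpleGraph V) (r : ℕ → V) : Prop :=
  ∀ n : ℕ, ∃ F : Fin n → ℕ → V,
    (∀ i, IsRay G (F i)) ∧ (∀ i, SameEnd G (F i) r) ∧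
    ∀ i j, i ≠ j → Disjoint (Set.range (F i)) (Set.range (F j))

/-- A graph is vertex transitive if its automorphism group acts transitively on vertices. -/
def VertexTransitive (G : SimpleGraph V) : Prop :=
  ∀ u v : V, ∃ e : G ≃g G, e u = v

/-- The robber-position history after the robber's move number `t`:
`[r t, r (t-1), ..., r 0]`. -/
def histList (r : ℕ → V) (t : ℕ) : List V :=
  ((List.range (t + 1)).map r).reverse

/-- A cop strategy for `k` cops (a function of the robber-position history) is legal for
speed `s_c` if each cop moves distance at most `s_c` per round. -/
def CopLegal (G : SimpleGraph V) (k s_c : ℕ) (S : List V → Fin k → V) : Prop :=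
  ∀ (h : List V) (u : V) (i : Fin k), G.dist (S h i) (S (u :: h) i) ≤ s_c

/-- A legal robber play against the cop strategy `S`: the robber starts at distance `> ρ`
from every cop, and in each round moves along a path of length at most `s_r` all of whose
vertices stay at distance `> ρ` from every cop. -/
def RobberPlayLegal (G : SimpleGraph V) (k s_r ρ : ℕ) (S : List V → Fin k → V)
    (r : ℕ → V) (w : ℕ → List V) : Prop :=
  (∀ i : Fin k, ρ < G.dist (S [] i) (r 0)) ∧
  ∀ t : ℕ, (w t).Chain' G.Adj ∧ (w t).head? = some (r t) ∧
    (w t).getLast? = some (r (t + 1)) ∧ (w t).length ≤ s_r + 1 ∧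
    ∀ u ∈ w t, ∀ i : Fin k, ρ < G.dist (S (histList r t) i) u

/-- The robber visits the ball `B(R, v)` infinitely often. -/
def RobberVisits (G : SimpleGraph V) (v : V) (R : ℕ) (r : ℕ → V) : Prop :=
  ∀ N : ℕ, ∃ t : ℕ, N ≤ t ∧ r t ∈ gBall G v R

/-- In the weak game, after the cops fix speed `s_c` and capture radius `ρ`, the robber can
choose a speed `s_r`, a base vertex `v` and a radius `R > ρ` and defeat every legal
cop strategy for `k` cops. -/
def RobberBeats (G : SimpleGraph V) (k s_c ρ : ℕ) : Prop :=
  ∃ s_r : ℕ, ∃ v : V, ∃ R : ℕ, ρ < R ∧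
    ∀ S : List V → Fin k → V, CopLegal G k s_c S →
      ∃ r w, RobberPlayLegal G k s_r ρ S r w ∧ RobberVisits G v R r

/-- The robber wins the weak game against `k` cops. -/
def RobberWinsWeak (G : SimpleGraph V) (k : ℕ) : Prop :=
  ∀ s_c ρ : ℕ, RobberBeats G k s_c ρ

/-- `k` cops win the weak game: the cops can choose `s_c` and `ρ` so that for every choice
of `s_r`, `v` and `R > ρ` by the robber there is a legal cop strategy against which no
legal robber play visits `B(R, v)` infinitely often. -/
def CopsWinWeak (G : SimpleGraph V) (k : ℕ) : Prop :=
  ∃ s_c ρ : ℕ, ∀ (s_r : ℕ) (v : V) (R : ℕ), ρ < R →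
    ∃ S : List V → Fin k → V, CopLegal G k s_c S ∧
      ∀ r w, RobberPlayLegal G k s_r ρ S r w → ¬ RobberVisits G v R r

lemma gBall_finite (G : SimpleGraph V) (hlf : ∀ x : V, (G.neighborSet x).Finite)
    (x : V) (n : ℕ) : (gBall G x n).Finite := by
  induction n with
  | zero =>
    apply Set.Finite.subset (Set.finite_singleton x)
    rintro u ⟨hr, hd⟩
    have := (hr.dist_eq_zero_iff).mp (Nat.le_zero.mp hd)
    simp [this]
  | succ n ih =>
    have : gBall G x (n+1) ⊆ gBall G x n ∪ ⋃ w ∈ gBall G x n, G.neighborSet w := by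
      rintro u ⟨hr, hd⟩
      rcases Nat.lt_or_ge (G.dist x u) (n+1) with h | h
      · exact Or.inl ⟨hr, Nat.lt_succ_iff.mp h⟩
      · have hne : G.dist x u ≠ 0 := by omega
        obtain ⟨p, hp⟩ := exists_walk_of_dist_ne_zero hne
        -- p : walk x u, length = dist = n+1 (≥ n+1, ≤ n+1)
        have hlen : p.length = n + 1 := by omega
        -- consider reverse walk from u to x
        cases hq : p.reverse with
        | nil => exact absurd SimpleGraph.dist_self hne
        | cons h' q' =>
          -- h' : G.Adj u w, q' : walk w x
          rename_i w
          refine Or.inr (Set.mem_biUnion (show w ∈ gBall G x n from ?_) h'.symm)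
          have hq'len : q'.length = n := by
            have := Walk.length_reverse p
            rw [hq] at this; simp at this; omega
          refine ⟨q'.reverse.reachable, ?_⟩
          have := dist_le q'.reverse
          simpa [hq'len] using this
    exact Set.Finite.subset (ih.union (ih.biUnion (fun w _ => hlf w))) this

theorem stmt2_aux (G : SimpleGraph V) (hlf : ∀ x : V, (G.neighborSet x).Finite)
    (v : V) (R k s ρ b m : ℕ)
    (hb : ∀ x : V, (gBall G x (s + ρ)).ncard ≤ b)
    (F : Fin m → ℕ → V)
    (hstart : ∀ i, F i 0 ∈ gBall G v R)
    (hdisj : ∀ i j, i ≠ j → Disjoint (Set.range (F i)) (Set.range (F j)))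
    (hm : k * b < m)
    (C : Finset V) (hC : C.card = k) :
    ∃ i : Fin m, ∀ n : ℕ, ∀ c ∈ C, F i n ∉ gBall G c (s + ρ) := by
  classical
  set Bad : V → Finset (Fin m) :=
    fun c => Finset.univ.filter (fun i => ∃ n, F i n ∈ gBall G c (s + ρ)) with hBadDef
  have hBad : ∀ c, (Bad c).card ≤ b := by
    intro c
    have hfin := gBall_finite G hlf c (s + ρ)
    set g : Fin m → V := fun i =>
      if h : ∃ n, F i n ∈ gBall G c (s + ρ) then F i h.choose else v with hg
    have hmaps : ∀ i ∈ Bad c, g i ∈ hfin.toFinset := by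
      intro i hi
      have h := (Finset.mem_filter.mp hi).2
      simp only [hg, dif_pos h]
      exact hfin.mem_toFinset.mpr h.choose_spec
    have hinj : Set.InjOn g (Bad c) := by
      intro i hi j hj hij
      by_contra hne
      have hi' := (Finset.mem_filter.mp hi).2
      have hj' := (Finset.mem_filter.mp hj).2
      have h1 : g i ∈ Set.range (F i) := by simp only [hg, dif_pos hi']; exact ⟨_, rfl⟩
      have h2 : g j ∈ Set.range (F j) := by simp only [hg, dif_pos hj']; exact ⟨_, rfl⟩
      exact Set.disjoint_left.mp (hdisj i j hne) h1 (hij ▸ h2)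
    calc (Bad c).card ≤ hfin.toFinset.card := Finset.card_le_card_of_injOn g hmaps hinj
      _ = (gBall G c (s + ρ)).ncard := (Set.ncard_eq_toFinset_card _ hfin).symm
      _ ≤ b := hb c
  have hsub : Finset.univ.filter (fun i => ∃ c ∈ C, ∃ n, F i n ∈ gBall G c (s + ρ))
      ⊆ C.biUnion Bad := by
    intro i hi
    obtain ⟨c, hc, hn⟩ := (Finset.mem_filter.mp hi).2
    exact Finset.mem_biUnion.mpr ⟨c, hc, Finset.mem_filter.mpr ⟨Finset.mem_univ _, hn⟩⟩
  have hcard : (Finset.univ.filter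
      (fun i => ∃ c ∈ C, ∃ n, F i n ∈ gBall G c (s + ρ))).card < (Finset.univ : Finset (Fin m)).card := by
    calc _ ≤ (C.biUnion Bad).card := Finset.card_le_card hsub
      _ ≤ ∑ c ∈ C, (Bad c).card := Finset.card_biUnion_le
      _ ≤ ∑ _c ∈ C, b := Finset.sum_le_sum (fun c _ => hBad c)
      _ = k * b := by rw [Finset.sum_const, hC, smul_eq_mul]
      _ < m := hm
      _ = Finset.univ.card := by simp
  have hex : ∃ i : Fin m,
      i ∉ Finset.univ.filter (fun i => ∃ c ∈ C, ∃ n, F i n ∈ gBall G c (s + ρ)) := by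
    by_contra h
    push_neg at h
    exact absurd (Finset.card_le_card (fun i _ => h i)) hcard.not_ge
  obtain ⟨i, hi⟩ := hex
  refine ⟨i, fun n c hc hmem => ?_⟩
  exact hi (Finset.mem_filter.mpr ⟨Finset.mem_univ _, c, hc, n, hmem⟩)

/-- Pigeonhole for rays: among more than `k * b` pairwise disjoint rays starting in
`B(R, v)`, if every ball of radius `s + ρ` has at most `b` vertices and `C` is a set of
`k` cop positions, then some ray avoids the `(s+ρ)`-ball around every cop, i.e. is
entirely at distance greater than `s + ρ` from every vertex of `C`. -/
theorem stmt2 (G : SimpleGraph V) (hlf : ∀ x : V, (G.neighborSet x).Finite)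
    (v : V) (R k s ρ b m : ℕ)
    (hb : ∀ x : V, (gBall G x (s + ρ)).ncard ≤ b)
    (F : Fin m → ℕ → V) (hray : ∀ i, IsRay G (F i))
    (hstart : ∀ i, F i 0 ∈ gBall G v R)
    (hdisj : ∀ i j, i ≠ j → Disjoint (Set.range (F i)) (Set.range (F j)))
    (hm : k * b < m)
    (C : Finset V) (hC : C.card = k) :
    ∃ i : Fin m, ∀ n : ℕ, ∀ c ∈ C, F i n ∉ gBall G c (s + ρ) := by
  exact stmt2_aux G hlf v R k s ρ b m hb F hstart hdisj hm C hC
end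

section
/- Every connected, locally finite, vertex transitive graph with at least one thick end has infinite weak cop number. -/
open SimpleGraph

universe u

variable {V : Type u}

/-!
By vertex transitivity all balls of radius `ρ + s_c` have the same finite size `M`, so the
`(ρ + s_c)`-neighbourhood of `k` cops has at most `k M` vertices. The thick end supplies
`k M + 1` disjoint rays `F a`, so at every moment some ray is entirely `(ρ + s_c)`-far from the
cops. Join each ray to `r` by infinitely many disjoint rungs and pick them so that the `j`-th
rungs of all rays land in the `j`-th of a sequence of disjoint segments of `r`. Between two
rays `a` and `b` this gives `3 k M + 1` routes (rung of `a`, segment, rung of `b`), and each of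
the three families is pairwise disjoint, so some route misses the cops' `ρ`-neighbourhood.
The robber waits at the start of a safe ray and each turn walks, along a safe route, to the
start of a ray that stays safe after the cops' next move; all these starts lie in a fixed ball.
-/

open Function

variable {G : SimpleGraph V}

lemma finite_gBall (hlf : ∀ x : V, (G.neighborSet x).Finite) (x : V) (n : ℕ) :
    (gBall G x n).Finite := by
  induction n generalizing x with
  | zero =>
    refine (Set.finite_singleton x).subset fun u ⟨hxu, hd⟩ => ?_
    exact (hxu.dist_eq_zero_iff.1 (Nat.le_zero.1 hd)).symm
  | succ n ih =>
    refine ((Set.finite_singleton x).union ((hlf x).biUnion fun y _ => ih y)).subset ?_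
    rintro u ⟨hxu, hd⟩
    obtain ⟨p, hp⟩ := hxu.exists_walk_length_eq_dist
    cases p with
    | nil => exact Or.inl rfl
    | cons hadj q =>
      refine Or.inr (Set.mem_biUnion hadj ⟨q.reachable, ?_⟩)
      have := dist_le q
      rw [Walk.length_cons] at hp
      omega

lemma SimpleGraph.Hom.edist_map_le {W : Type*} {G' : SimpleGraph W} (f : G →g G') (u v : V) :
    G'.edist (f u) (f v) ≤ G.edist u v :=
  le_iInf fun p => (edist_le (p.map f)).trans_eq (by rw [Walk.length_map])

lemma SimpleGraph.Iso.edist_map {W : Type*} {G' : SimpleGraph W} (e : G ≃g G') (u v : V) :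
    G'.edist (e u) (e v) = G.edist u v :=
  le_antisymm (Hom.edist_map_le e.toHom u v)
    (by simpa using Hom.edist_map_le e.symm.toHom (e u) (e v))

lemma SimpleGraph.Iso.dist_map {W : Type*} {G' : SimpleGraph W} (e : G ≃g G') (u v : V) :
    G'.dist (e u) (e v) = G.dist u v :=
  congrArg ENat.toNat (e.edist_map u v)

lemma SimpleGraph.Iso.image_gBall {W : Type*} {G' : SimpleGraph W} (e : G ≃g G') (x : V)
    (n : ℕ) : e '' gBall G x n = gBall G' (e x) n := by
  ext y
  obtain ⟨z, rfl⟩ := e.surjective y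
  simp [gBall, e.injective.mem_set_image, Iso.reachable_iff, e.dist_map]

lemma VertexTransitive.ncard_gBall (htrans : VertexTransitive G) (x y : V) (n : ℕ) :
    (gBall G x n).ncard = (gBall G y n).ncard := by
  obtain ⟨e, rfl⟩ := htrans x y
  rw [← e.image_gBall, Set.ncard_image_of_injective _ e.injective]

def gNbhd (G : SimpleGraph V) {ι : Type*} (x : ι → V) (d : ℕ) : Set V :=
  ⋃ i, gBall G (x i) d

section gNbhd

variable {ι : Type*}

lemma finite_gNbhd [Finite ι] (hlf : ∀ x : V, (G.neighborSet x).Finite) (x : ι → V)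
    (d : ℕ) : (gNbhd G x d).Finite :=
  Set.finite_iUnion fun i => finite_gBall hlf (x i) d

lemma ncard_gNbhd_le [Fintype ι] (htrans : VertexTransitive G) (x : ι → V) (d : ℕ) (v : V) :
    (gNbhd G x d).ncard ≤ Fintype.card ι * (gBall G v d).ncard := by
  refine (Set.ncard_iUnion_le_of_fintype _).trans ?_
  simp [htrans.ncard_gBall _ v]

variable {x y : ι → V} {d : ℕ}

lemma gNbhd_mono {d' : ℕ} (h : d ≤ d') : gNbhd G x d ⊆ gNbhd G x d' :=
  Set.iUnion_mono fun _ _ ⟨hr, hd⟩ => ⟨hr, hd.trans (by exact_mod_cast h)⟩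

lemma lt_dist_of_notMem_gNbhd (hconn : G.Connected) {u : V} (hu : u ∉ gNbhd G x d) (i : ι) :
    d < G.dist (x i) u := by
  by_contra! h
  exact hu (Set.mem_iUnion.2 ⟨i, hconn.preconnected _ _, h⟩)

lemma gNbhd_subset_of_dist_le (hconn : G.Connected) {s : ℕ}
    (h : ∀ i, G.dist (x i) (y i) ≤ s) :
    gNbhd G y d ⊆ gNbhd G x (d + s) := by
  refine Set.iUnion_mono fun i u ⟨_, hu⟩ => ⟨hconn.preconnected _ _, ?_⟩
  have := hconn.dist_triangle (u := x i) (v := y i) (w := u)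
  have := h i
  omega

end gNbhd

section Counting

variable {X : Set V}

lemma ncard_setOf_not_disjoint_le {ι : Type*} {A : ι → Set V} (hA : Pairwise (Disjoint on A))
    (hX : X.Finite) : {i | ¬ Disjoint (A i) X}.ncard ≤ X.ncard := by
  have hmeet : ∀ i : {i | ¬ Disjoint (A i) X}, ∃ x : X, x.1 ∈ A i := fun i => by
    obtain ⟨x, hxA, hxX⟩ := Set.not_disjoint_iff.1 i.2
    exact ⟨⟨x, hxX⟩, hxA⟩
  choose f hf using hmeet
  have : Finite X := hX.to_subtype
  have hf_inj : Injective f := fun i j hij => Subtype.ext <| by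
    by_contra hne
    exact Set.disjoint_left.1 (hA hne) (hf i) (hij ▸ hf j)
  simpa only [Nat.card_coe_set_eq] using Nat.card_le_card_of_injective f hf_inj

lemma exists_notMem_of_ncard_lt {ι : Type*} [Finite ι] {s : Set ι} (h : s.ncard < Nat.card ι) :
    ∃ i, i ∉ s :=
  (Set.ne_univ_iff_exists_notMem s).1 fun hs => by simp [hs] at h

lemma exists_disjoint_of_ncard_lt {ι : Type*} [Finite ι] {A : ι → Set V}
    (hA : Pairwise (Disjoint on A)) (hX : X.Finite) (h : X.ncard < Nat.card ι) :
    ∃ i, Disjoint (A i) X := by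
  obtain ⟨i, hi⟩ := exists_notMem_of_ncard_lt ((ncard_setOf_not_disjoint_le hA hX).trans_lt h)
  exact ⟨i, not_not.1 hi⟩

lemma exists_le_disjoint₃ {A B C : ℕ → Set V} (hA : Pairwise (Disjoint on A))
    (hB : Pairwise (Disjoint on B)) (hC : Pairwise (Disjoint on C)) (hX : X.Finite) :
    ∃ i ≤ 3 * X.ncard, Disjoint (A i) X ∧ Disjoint (B i) X ∧ Disjoint (C i) X := by
  let bad (D : ℕ → Set V) : Set (Fin (3 * X.ncard + 1)) := {i | ¬ Disjoint (D i) X}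
  have hbad : ∀ D : ℕ → Set V, Pairwise (Disjoint on D) → (bad D).ncard ≤ X.ncard :=
    fun D hD => ncard_setOf_not_disjoint_le (hD.comp_of_injective Fin.val_injective) hX
  obtain ⟨i, hi⟩ := exists_notMem_of_ncard_lt (s := bad A ∪ bad B ∪ bad C) <| by
    have := Set.ncard_union_le (bad A ∪ bad B) (bad C)
    have := Set.ncard_union_le (bad A) (bad B)
    have := hbad A hA
    have := hbad B hB
    have := hbad C hC
    simp only [Nat.card_eq_fintype_card, Fintype.card_fin]
    omega
  simp only [bad, Set.mem_union, Set.mem_ofPred_eq, not_or, not_not] at hi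
  exact ⟨i, Nat.lt_succ_iff.1 i.2, hi.1.1, hi.1.2, hi.2⟩

end Counting

lemma exists_walk_support_eq {l : List V} (hl : l.IsChain G.Adj) {u v : V}
    (hu : l.head? = some u) (hv : l.getLast? = some v) : ∃ p : G.Walk u v, p.support = l := by
  induction l generalizing u with
  | nil => simp at hu
  | cons x t ih =>
    rw [List.head?_cons, Option.some_inj] at hu
    subst hu
    cases t with
    | nil =>
      obtain rfl : x = v := by simpa using hv
      exact ⟨Walk.nil, rfl⟩
    | cons y t =>
      obtain ⟨hxy, ht⟩ := List.isChain_cons_cons.1 hl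
      obtain ⟨p, hp⟩ := ih ht rfl (by simpa using hv)
      exact ⟨Walk.cons hxy p, by simp [hp]⟩

lemma exists_walk_of_adj_succ {f : ℕ → V} (hf : ∀ m, G.Adj (f m) (f (m + 1))) (i j : ℕ) :
    ∃ p : G.Walk (f i) (f j), ∀ u ∈ p.support, u ∈ f '' Set.uIcc i j := by
  wlog hij : i ≤ j generalizing i j
  · obtain ⟨p, hp⟩ := this j i (le_of_not_ge hij)
    exact ⟨p.reverse, by simpa [Set.uIcc_comm] using hp⟩
  induction j, hij using Nat.le_induction with
  | base => exact ⟨Walk.nil, by simp⟩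
  | succ j hij ih =>
    obtain ⟨p, hp⟩ := ih
    refine ⟨p.concat (hf j), fun u hu => ?_⟩
    rw [Walk.support_concat, List.mem_append, List.mem_singleton] at hu
    rw [Set.uIcc_of_le (by omega)]
    rcases hu with hu | rfl
    · obtain ⟨m, hm, rfl⟩ := hp u hu
      rw [Set.uIcc_of_le hij] at hm
      exact ⟨m, ⟨hm.1, hm.2.trans j.le_succ⟩, rfl⟩
    · exact ⟨j + 1, ⟨by omega, le_rfl⟩, rfl⟩

lemma SameEnd.exists_walks {f g : ℕ → V} (h : SameEnd G f g) :
    ∃ (C : ℕ → Set V) (land : ℕ → ℕ), Pairwise (Disjoint on C) ∧ Injective land ∧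
      ∀ i, ∃ s, ∃ p : G.Walk (f s) (g (land i)), ∀ u ∈ p.support, u ∈ C i := by
  obtain ⟨P, hjoin, hdisj⟩ := h
  have hends : ∀ i, ∃ s m, (P i).head? = some (f s) ∧ (P i).getLast? = some (g m) := by
    intro i
    obtain ⟨-, ⟨-, ⟨s, rfl⟩, hs⟩, ⟨-, ⟨m, rfl⟩, hm⟩⟩ := hjoin i
    exact ⟨s, m, hs, hm⟩
  choose s land hs hland using hends
  refine ⟨fun i => {u | u ∈ P i}, land, fun i j hij => Set.disjoint_left.2 (hdisj i j hij ·),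
    fun i j hij => ?_, fun i => ?_⟩
  · by_contra hne
    exact hdisj i j hne _ (List.mem_of_getLast? (hland i)) (hij ▸ List.mem_of_getLast? (hland j))
  · obtain ⟨p, hp⟩ := exists_walk_support_eq (hjoin i).1.2.1 (hs i) (hland i)
    exact ⟨s i, p, fun u hu => show u ∈ P i from hp ▸ hu⟩

lemma exists_strictMono_interleaving {n : ℕ} [NeZero n] {land : Fin n → ℕ → ℕ}
    (hland : ∀ a, Injective (land a)) :
    ∃ φ : ℕ → ℕ, StrictMono φ ∧ ∀ a j, ∃ i, land a i = φ (j * n + a) := by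
  obtain ⟨φ, hφ, hφland⟩ := Filter.extraction_forall_of_frequently fun s : ℕ =>
    Nat.frequently_atTop_iff_infinite.2 (Set.infinite_range_of_injective (hland (Fin.ofNat n s)))
  refine ⟨φ, hφ, fun a j => ?_⟩
  have hcast : Fin.ofNat n (j * n + a) = a := by
    ext
    simp [Nat.mod_eq_of_lt a.isLt]
  simpa only [hcast] using hφland (j * n + a)

lemma exists_ladder {n : ℕ} [NeZero n] {r : ℕ → V} (hr : IsRay G r) {F : Fin n → ℕ → V}
    (hF : ∀ a m, G.Adj (F a m) (F a (m + 1))) (hend : ∀ a, SameEnd G (F a) r) :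
    ∃ (C : Fin n → ℕ → Set V) (B : ℕ → Set V), (∀ a, Pairwise (Disjoint on C a)) ∧
      Pairwise (Disjoint on B) ∧ ∀ a b j, ∃ p : G.Walk (F a 0) (F b 0), ∀ u ∈ p.support,
        u ∈ Set.range (F a) ∪ C a j ∪ B j ∪ C b j ∪ Set.range (F b) := by
  choose C land hC hland hwalk using fun a => (hend a).exists_walks
  obtain ⟨φ, hφ, hband⟩ := exists_strictMono_interleaving hland
  choose idx hidx using hband
  set I : ℕ → Set ℕ := fun j => Set.Ico (φ (j * n)) (φ ((j + 1) * n))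
  have hland_mem : ∀ a j, land a (idx a j) ∈ I j := fun a j => by
    rw [hidx]
    exact ⟨hφ.monotone (by omega), hφ (by rw [Nat.add_mul, one_mul]; omega)⟩
  refine ⟨fun a j => C a (idx a j), fun j => r '' I j, fun a j j' hjj' => hC a fun h => hjj' ?_,
    fun j j' hjj' => ?_, fun a b j => ?_⟩
  · have := hφ.injective ((hidx a j).symm.trans ((congrArg (land a) h).trans (hidx a j')))
    exact Nat.eq_of_mul_eq_mul_right (Nat.pos_of_neZero n) (by omega)
  · have hmono : Monotone fun j => φ (j * n) :=
      hφ.monotone.comp fun _ _ h => Nat.mul_le_mul_right n h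
    exact (Set.disjoint_image_iff hr.1).2 (hmono.pairwise_disjoint_on_Ico_succ hjj')
  · obtain ⟨s, p, hp⟩ := hwalk a (idx a j)
    obtain ⟨s', p', hp'⟩ := hwalk b (idx b j)
    obtain ⟨q, hq⟩ := exists_walk_of_adj_succ (hF a) 0 s
    obtain ⟨q', hq'⟩ := exists_walk_of_adj_succ (hF b) 0 s'
    obtain ⟨c, hc⟩ := exists_walk_of_adj_succ hr.2 (land a (idx a j)) (land b (idx b j))
    have hc_band := Set.image_mono (f := r)
      (Set.ordConnected_Ico.uIcc_subset (hland_mem a j) (hland_mem b j))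
    refine ⟨q.append (p.append (c.append (p'.reverse.append q'.reverse))), fun u hu => ?_⟩
    simp only [Walk.mem_support_append_iff, Walk.support_reverse, List.mem_reverse] at hu
    simp only [Set.mem_union]
    rcases hu with hu | hu | hu | hu | hu
    · obtain ⟨m, -, rfl⟩ := hq u hu
      exact Or.inl (Or.inl (Or.inl (Or.inl ⟨m, rfl⟩)))
    · exact Or.inl (Or.inl (Or.inl (Or.inr (hp u hu))))
    · exact Or.inl (Or.inl (Or.inr (hc_band (hc u hu))))
    · exact Or.inl (Or.inr (hp' u hu))
    · obtain ⟨m, -, rfl⟩ := hq' u hu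
      exact Or.inr ⟨m, rfl⟩

lemma exists_short_routes_avoiding {n : ℕ} [NeZero n] {r : ℕ → V} (hr : IsRay G r)
    {F : Fin n → ℕ → V} (hF : ∀ a m, G.Adj (F a m) (F a (m + 1)))
    (hend : ∀ a, SameEnd G (F a) r) (N : ℕ) :
    ∃ L : ℕ, ∀ X : Set V, X.Finite → X.ncard ≤ N → ∀ a b,
      Disjoint (Set.range (F a)) X → Disjoint (Set.range (F b)) X →
      ∃ p : G.Walk (F a 0) (F b 0), p.length ≤ L ∧ ∀ u ∈ p.support, u ∉ X := by
  obtain ⟨C, B, hC, hB, hW⟩ := exists_ladder hr hF hend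
  choose W hW using hW
  obtain ⟨L, hL⟩ := (Set.finite_range fun p : Fin n × Fin n × Fin (3 * N + 1) =>
    (W p.1 p.2.1 p.2.2).length).bddAbove
  refine ⟨L, fun X hX hXN a b ha hb => ?_⟩
  obtain ⟨j, hj, hCa, hCb, hBj⟩ := exists_le_disjoint₃ (hC a) (hC b) hB hX
  have hsafe : Disjoint (Set.range (F a) ∪ C a j ∪ B j ∪ C b j ∪ Set.range (F b)) X := by
    simp only [Set.disjoint_union_left]
    exact ⟨⟨⟨⟨ha, hCa⟩, hBj⟩, hCb⟩, hb⟩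
  exact ⟨W a b j, hL ⟨(a, b, ⟨j, by omega⟩), rfl⟩,
    fun u hu => Set.disjoint_left.1 hsafe (hW a b j u hu)⟩

lemma histList_succ (r : ℕ → V) (t : ℕ) : histList r (t + 1) = r (t + 1) :: histList r t := by
  simp [histList, List.range_succ]

lemma head?_histList (r : ℕ → V) (t : ℕ) : (histList r t).head? = some (r t) := by
  cases t <;> simp [histList, List.range_succ]

lemma exists_robberPlayLegal {k s_r ρ : ℕ} (S : List V → Fin k → V) (Inv : List V → Prop)
    {v₀ : V} (hstart : ∀ i, ρ < G.dist (S [] i) v₀) (hinv : Inv [v₀])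
    (hmove : ∀ h, Inv h → ∃ (v : V) (l : List V), l.IsChain G.Adj ∧ l.head? = h.head? ∧
      l.getLast? = some v ∧ l.length ≤ s_r + 1 ∧
      (∀ u ∈ l, ∀ i, ρ < G.dist (S h i) u) ∧ Inv (v :: h)) :
    ∃ r w, RobberPlayLegal G k s_r ρ S r w ∧ ∀ t, Inv (histList r t) := by
  have : Nonempty V := ⟨v₀⟩
  choose! next route hchain hhead hlast hlen hsafe hnext using hmove
  let H : ℕ → List V := fun t => Nat.rec [v₀] (fun _ h => next h :: h) t
  let r : ℕ → V := fun t => Nat.casesOn t v₀ fun t => next (H t)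
  have hH : ∀ t, histList r t = H t := by
    intro t
    induction t with
    | zero => rfl
    | succ t ih => rw [histList_succ, ih]
  have hinvH : ∀ t, Inv (H t) := by
    intro t
    induction t with
    | zero => exact hinv
    | succ t ih => exact hnext _ ih
  refine ⟨r, fun t => route (H t), ⟨hstart, fun t => ?_⟩, fun t => hH t ▸ hinvH t⟩
  have hinvt := hinvH t
  exact ⟨hchain _ hinvt, by rw [hhead _ hinvt, ← hH, head?_histList], hlast _ hinvt,
    hlen _ hinvt, hH t ▸ hsafe _ hinvt⟩

lemma exists_winning_robberPlay_of_homes (hconn : G.Connected) {k s_c ρ s_r R : ℕ} {ι : Type*}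
    {v : V} (home : ι → V) (A : ι → Set V) (hhome : ∀ a, home a ∈ A a)
    (hR : ∀ a, home a ∈ gBall G v R)
    (hfar : ∀ x : Fin k → V, ∃ a, Disjoint (A a) (gNbhd G x (ρ + s_c)))
    (hroute : ∀ (x : Fin k → V) (a b : ι), Disjoint (A a) (gNbhd G x ρ) →
      Disjoint (A b) (gNbhd G x ρ) →
      ∃ p : G.Walk (home a) (home b), p.length ≤ s_r ∧
        ∀ u ∈ p.support, u ∉ gNbhd G x ρ)
    (S : List V → Fin k → V) (hS : CopLegal G k s_c S) :
    ∃ r w, RobberPlayLegal G k s_r ρ S r w ∧ RobberVisits G v R r := by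
  have hnext : ∀ h, ∃ b, Disjoint (A b) (gNbhd G (S h) ρ) ∧
      Disjoint (A b) (gNbhd G (S (home b :: h)) ρ) := fun h => by
    obtain ⟨b, hb⟩ := hfar (S h)
    exact ⟨b, hb.mono_right (gNbhd_mono (by omega)),
      hb.mono_right (gNbhd_subset_of_dist_le hconn (hS h (home b)))⟩
  obtain ⟨b₀, hb₀, hb₀'⟩ := hnext []
  obtain ⟨r, w, hplay, hinv⟩ := exists_robberPlayLegal (s_r := s_r) S
    (fun h => ∃ a, h.head? = some (home a) ∧ Disjoint (A a) (gNbhd G (S h) ρ))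
    (lt_dist_of_notMem_gNbhd hconn (Set.disjoint_left.1 hb₀ (hhome b₀))) ⟨b₀, rfl, hb₀'⟩
    (fun h ⟨a, hhead, ha⟩ => by
      obtain ⟨b, hb, hb'⟩ := hnext h
      obtain ⟨p, hp, hsafe⟩ := hroute (S h) a b ha hb
      refine ⟨home b, p.support, p.isChain_adj_support, ?_, ?_, ?_,
        fun u hu => lt_dist_of_notMem_gNbhd hconn (hsafe u hu), b, rfl, hb'⟩
      · rw [hhead, ← p.cons_tail_support]; rfl
      · rw [List.getLast?_eq_some_getLast p.support_ne_nil, p.getLast_support]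
      · rw [p.length_support]; omega)
  refine ⟨r, w, hplay, fun N => ⟨N, le_rfl, ?_⟩⟩
  obtain ⟨a, hhead, -⟩ := hinv N
  rw [head?_histList, Option.some_inj] at hhead
  exact hhead ▸ hR a

/-- Every connected, locally finite, vertex transitive graph with at least one thick end
has infinite weak cop number: for every `k` the robber beats `k` cops in the weak game. -/
theorem stmt9 (G : SimpleGraph V) (hconn : G.Connected)
    (hlf : ∀ x : V, (G.neighborSet x).Finite)
    (htrans : VertexTransitive G)
    (r : ℕ → V) (hr : IsRay G r) (hthick : ThickEnd G r) :
    ∀ k : ℕ, RobberWinsWeak G k := by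
  intro k s_c ρ
  set M := (gBall G (r 0) (ρ + s_c)).ncard
  have hnbhd : ∀ (x : Fin k → V) d, d ≤ ρ + s_c → (gNbhd G x d).ncard ≤ k * M :=
    fun x d hd => (Set.ncard_le_ncard (gNbhd_mono hd) (finite_gNbhd hlf x _)).trans
      (by simpa using ncard_gNbhd_le htrans x (ρ + s_c) (r 0))
  obtain ⟨F, hFray, hFend, hFdisj⟩ := hthick (k * M + 1)
  obtain ⟨s_r, hroute⟩ := exists_short_routes_avoiding hr (fun a => (hFray a).2) hFend (k * M)
  obtain ⟨R, hR⟩ := (Set.finite_range fun a => G.dist (r 0) (F a 0)).bddAbove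
  exact ⟨s_r, r 0, R + ρ + 1, by omega, exists_winning_robberPlay_of_homes hconn
    (fun a => F a 0) (fun a => Set.range (F a)) (fun a => ⟨0, rfl⟩)
    (fun a => ⟨hconn.preconnected _ _, (hR ⟨a, rfl⟩).trans (by omega)⟩)
    (fun x => exists_disjoint_of_ncard_lt hFdisj (finite_gNbhd hlf x _)
      (by simpa using Nat.lt_succ_of_le (hnbhd x _ le_rfl)))
    (fun x => hroute _ (finite_gNbhd hlf x ρ) (hnbhd x ρ (by omega)))⟩
end
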